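/- Let Θ be a nonempty index set and (κ_θ)_{θ∈Θ} a family of Markov kernels on ℝ^d with nonlinear Markov operator P̄f(x) = sup_{θ∈Θ} ∫ f dκ_θ(x,·). Let Φ : [0,∞) → [0,∞) be a continuous strictly increasing bijection (so Φ(0) = 0 and Φ(r) → ∞) such that r ↦ r·Φ⁻¹(r) is convex on [0,∞), let Ψ : ℝ^d × ℝ^d → [0,∞) be Borel measurable, and assume the Harnack-type inequality Φ(P̄f(x)) ≤ P̄(Φ∘f)(y)·e^{Ψ(x,y)} for all bounded Borel measurable f ≥ 0 and all x, y ∈ ℝ^d. Let μ be a probability measure on ℝ^d, suppose there are jointly Borel measurable p_θ : ℝ^d × ℝ^d → [0,∞) with κ_θ(x, A) = ∫_A p_θ(x,z) μ(dz) for all θ, x and Borel A, and let p : ℝ^d × ℝ^d → [0,∞] be a jointly Borel measurable sup-kernel of P̄ with respect to μ satisfying p(x,z) ≥ p_θ(x,z) for all θ, x, z. Then ∫_{ℝ^d} p(x,z)·p(y,z) μ(dz) ≥ e^{−Ψ(x,y)} for all x, y ∈ ℝ^d. -/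

import Mathlib

open MeasureTheory ProbabilityTheory Filter

/-- The nonlinear Markov operator `P̄ f x = ⨆ θ, ∫ f dκ_θ(x,·)` associated with a family
of Markov kernels on `ℝ^d`. -/
noncomputable def nlOp {d : ℕ} {Θ : Type*}
    (κ : Θ → Kernel (EuclideanSpace ℝ (Fin d)) (EuclideanSpace ℝ (Fin d)))
    (f : EuclideanSpace ℝ (Fin d) → ℝ) (x : EuclideanSpace ℝ (Fin d)) : ℝ :=
  ⨆ θ, ∫ y, f y ∂(κ θ x)

/-!
Fix `x`, `y` and some `θ`, and let `q = p_θ(x,·)` be the density of `κ_θ(x,·)`. For the truncations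
`g_n = min(q, n)` put `m_n = ∫ g_n dμ`. Jensen's inequality for the convex function `r ↦ r Φ⁻¹(r)`
gives `m_n Φ⁻¹(m_n) ≤ ∫ g_n Φ⁻¹(g_n) dμ ≤ ∫ Φ⁻¹(g_n) dκ_θ(x,·) ≤ P̄(Φ⁻¹ ∘ g_n)(x)`. Applying `Φ` and
the Harnack inequality to `Φ⁻¹ ∘ g_n` bounds `Φ(m_n Φ⁻¹(m_n))` by
`P̄ g_n(y) e^{Ψ(x,y)} ≤ e^{Ψ(x,y)} ∫ p(y,z) p(x,z) μ(dz)`, by the sup-kernel property and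
`g_n ≤ q ≤ p(x,·)`.
As `n → ∞`, `m_n → 1` and the left side tends to `Φ(Φ⁻¹(1)) = 1`.
-/

open Set Topology

theorem StrictMonoOn.monotoneOn_of_leftInvOn {α β : Type*} [LinearOrder α] [Preorder β]
    {f : α → β} {g : β → α} {s : Set α} {t : Set β} (hf : StrictMonoOn f s)
    (hg : MapsTo g t s) (hfg : LeftInvOn f g t) : MonotoneOn g t :=
  fun _ ha _ hb hab => (hf.le_iff_le (hg ha) (hg hb)).1 (by rwa [hfg ha, hfg hb])

theorem MonotoneOn.exists_monotone_continuous_eqOn_Ici {α : Type*} [LinearOrder α]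
    [TopologicalSpace α] [OrderTopology α] [DenselyOrdered α] {g : α → α} {a : α}
    (hmono : MonotoneOn g (Ici a)) (hmaps : MapsTo g (Ici a) (Ici a))
    (hsurj : SurjOn g (Ici a) (Ici a)) :
    ∃ G : α → α, Monotone G ∧ Continuous G ∧ EqOn G g (Ici a) := by
  classical
  set G : α → α := fun r => if a ≤ r then g r else r
  have hGmono : Monotone G := by
    intro r s hrs
    simp only [G]
    split_ifs with hr hs hs
    · exact hmono hr hs hrs
    · exact absurd (hr.trans hrs) hs
    · exact (not_le.1 hr).le.trans (hmaps hs)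
    · exact hrs
  have hGsurj : Function.Surjective G := by
    intro r
    by_cases hr : a ≤ r
    · obtain ⟨s, hs, rfl⟩ := hsurj hr
      exact ⟨s, if_pos hs⟩
    · exact ⟨r, if_neg hr⟩
  exact ⟨G, hGmono, hGmono.continuous_of_surjective hGsurj, fun r hr => if_pos hr⟩

/-- Nothing is known about `Φinv` off `[0, ∞)`; the integrands below need a globally continuous
(hence measurable) version of it. -/
theorem exists_monotone_continuous_eqOn_inv {Φ Φinv : ℝ → ℝ} (hΦ : StrictMonoOn Φ (Ici 0))
    (hΦmaps : MapsTo Φ (Ici 0) (Ici 0)) (hleft : LeftInvOn Φinv Φ (Ici 0))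
    (hright : LeftInvOn Φ Φinv (Ici 0)) (hmaps : MapsTo Φinv (Ici 0) (Ici 0)) :
    ∃ G : ℝ → ℝ, Monotone G ∧ Continuous G ∧ EqOn G Φinv (Ici 0) :=
  (hΦ.monotoneOn_of_leftInvOn hmaps hright).exists_monotone_continuous_eqOn_Ici hmaps
    fun r hr => ⟨Φ r, hΦmaps hr, hleft hr⟩

theorem tendsto_comp_mul_comp_of_tendsto_one {Φ ψ : ℝ → ℝ} (hΦ : ContinuousOn Φ (Ici 0))
    (hψ : Continuous ψ) (hψmaps : MapsTo ψ (Ici 0) (Ici 0)) {ι : Type*} {l : Filter ι}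
    {m : ι → ℝ} (hm : Tendsto m l (𝓝 1)) (hm0 : ∀ i, 0 ≤ m i) :
    Tendsto (fun i => Φ (m i * ψ (m i))) l (𝓝 (Φ (ψ 1))) := by
  have hprod : Tendsto (fun i => m i * ψ (m i)) l (𝓝[Ici 0] (ψ 1)) := by
    refine tendsto_nhdsWithin_iff.2 ⟨?_, .of_forall fun i => mul_nonneg (hm0 i) (hψmaps (hm0 i))⟩
    simpa using hm.mul ((hψ.tendsto 1).comp hm)
  exact (hΦ (ψ 1) (hψmaps (mem_Ici.2 zero_le_one))).tendsto.comp hprod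

theorem ENNReal.ofReal_exp_neg_le {I : ENNReal} {a : ℝ}
    (h : 1 ≤ I * ENNReal.ofReal (Real.exp a)) : ENNReal.ofReal (Real.exp (-a)) ≤ I := by
  rw [Real.exp_neg, ENNReal.ofReal_inv_of_pos (Real.exp_pos a), ← one_div]
  exact ENNReal.div_le_of_le_mul h

section Density

variable {X : Type*} [MeasurableSpace X] {μ : Measure X} {q : X → ℝ}

theorem integral_withDensity_ofReal (hq : Measurable q) (hq0 : ∀ z, 0 ≤ q z) (f : X → ℝ) :
    ∫ z, f z ∂μ.withDensity (fun z => ENNReal.ofReal (q z)) = ∫ z, q z * f z ∂μ := by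
  rw [integral_withDensity_eq_integral_toReal_smul (f := fun z => ENNReal.ofReal (q z))
    (by fun_prop) (.of_forall fun _ => ENNReal.ofReal_lt_top)]
  simp only [ENNReal.toReal_ofReal (hq0 _), smul_eq_mul]

theorem integrable_of_isFiniteMeasure_withDensity_ofReal (hq : Measurable q) (hq0 : ∀ z, 0 ≤ q z)
    [IsFiniteMeasure (μ.withDensity fun z => ENNReal.ofReal (q z))] : Integrable q μ := by
  refine (lintegral_ofReal_ne_top_iff_integrable hq.aestronglyMeasurable (.of_forall hq0)).1 ?_
  rw [← setLIntegral_univ, ← withDensity_apply _ MeasurableSet.univ]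
  exact measure_ne_top _ _

theorem tendsto_integral_min_natCast (hq : Integrable q μ) :
    Tendsto (fun n : ℕ => ∫ z, min (q z) n ∂μ) atTop (𝓝 (∫ z, q z ∂μ)) := by
  refine tendsto_integral_of_dominated_convergence (fun z => ‖q z‖)
    (fun n => (hq.1.inf aestronglyMeasurable_const)) hq.norm (fun n => .of_forall fun z => ?_)
    (.of_forall fun z => tendsto_const_nhds.congr' ?_)
  · rw [Real.norm_eq_abs, Real.norm_eq_abs, abs_le]
    exact ⟨le_min (neg_abs_le _) ((neg_nonpos.2 (abs_nonneg _)).trans n.cast_nonneg),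
      (min_le_left _ _).trans (le_abs_self _)⟩
  · filter_upwards [eventually_ge_atTop ⌈q z⌉₊] with n hn
    exact (min_eq_left ((Nat.le_ceil (q z)).trans (Nat.cast_le.2 hn))).symm

theorem integral_mul_map_integral_le_integral_mul [IsProbabilityMeasure μ] {ψ : ℝ → ℝ}
    (hψ : Continuous ψ) (hψmono : Monotone ψ) (hψmaps : MapsTo ψ (Ici 0) (Ici 0))
    (hconv : ConvexOn ℝ (Ici 0) fun r => r * ψ r) (hq : Integrable q μ) {g : X → ℝ} {C : ℝ}
    (hg : Measurable g) (hg0 : ∀ z, 0 ≤ g z) (hgC : ∀ z, g z ≤ C) (hgq : ∀ z, g z ≤ q z) :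
    (∫ z, g z ∂μ) * ψ (∫ z, g z ∂μ) ≤ ∫ z, q z * ψ (g z) ∂μ := by
  have hψg : Measurable fun z => ψ (g z) := hψ.measurable.comp hg
  have hψg0 : ∀ z, 0 ≤ ψ (g z) := fun z => hψmaps (hg0 z)
  have hgψg : ∀ z, ‖g z * ψ (g z)‖ ≤ C * ψ C := fun z => by
    rw [Real.norm_of_nonneg (mul_nonneg (hg0 z) (hψg0 z))]
    exact mul_le_mul (hgC z) (hψmono (hgC z)) (hψg0 z) ((hg0 z).trans (hgC z))
  have hgint : Integrable g μ := .of_bound hg.aestronglyMeasurable C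
    (.of_forall fun z => by rw [Real.norm_of_nonneg (hg0 z)]; exact hgC z)
  calc (∫ z, g z ∂μ) * ψ (∫ z, g z ∂μ) ≤ ∫ z, g z * ψ (g z) ∂μ :=
        hconv.map_integral_le (hψ.continuousOn.mul continuousOn_id |>.congr fun r _ => mul_comm _ _)
          isClosed_Ici (.of_forall hg0) hgint
          (.of_bound (hg.mul hψg).aestronglyMeasurable _ (.of_forall hgψg))
    _ ≤ ∫ z, q z * ψ (g z) ∂μ := by
        refine integral_mono (.of_bound (hg.mul hψg).aestronglyMeasurable _ (.of_forall hgψg))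
          (hq.mul_bdd hψg.aestronglyMeasurable (c := ψ C) (.of_forall fun z => ?_))
          fun z => mul_le_mul_of_nonneg_right (hgq z) (hψg0 z)
        rw [Real.norm_of_nonneg (hψg0 z)]
        exact hψmono (hgC z)

end Density

section NonlinearMarkov

variable {d : ℕ} {Θ : Type*}

local notation "E" => EuclideanSpace ℝ (Fin d)

def HarnackIneq (κ : Θ → Kernel E E) (Φ : ℝ → ℝ) (Ψ : E → E → ℝ) : Prop :=
  ∀ f : E → ℝ, Measurable f → (∀ y, 0 ≤ f y) → (∃ C, ∀ y, f y ≤ C) → ∀ x y,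
    Φ (nlOp κ f x) ≤ nlOp κ (fun z => Φ (f z)) y * Real.exp (Ψ x y)

def IsSupKernel (κ : Θ → Kernel E E) (μ : Measure E) (p : E → E → ENNReal) : Prop :=
  ∀ f : E → ℝ, Measurable f → (∀ z, 0 ≤ f z) → (∃ C, ∀ z, f z ≤ C) → ∀ x,
    ENNReal.ofReal (nlOp κ f x) ≤ ∫⁻ z, p x z * ENNReal.ofReal (f z) ∂μ

variable {κ : Θ → Kernel (EuclideanSpace ℝ (Fin d)) (EuclideanSpace ℝ (Fin d))}

theorem nlOp_nonneg {f : E → ℝ} (hf : ∀ z, 0 ≤ f z) (x : E) : 0 ≤ nlOp κ f x :=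
  Real.iSup_nonneg fun _ => integral_nonneg hf

theorem integral_le_nlOp (hκ : ∀ θ, IsMarkovKernel (κ θ)) {f : E → ℝ} {C : ℝ}
    (hf : Measurable f) (hf0 : ∀ z, 0 ≤ f z) (hfC : ∀ z, f z ≤ C) (θ : Θ) (x : E) :
    ∫ z, f z ∂κ θ x ≤ nlOp κ f x := by
  refine le_ciSup (f := fun θ' => ∫ z, f z ∂κ θ' x) ⟨C, ?_⟩ θ
  rintro _ ⟨θ', rfl⟩
  calc ∫ z, f z ∂κ θ' x ≤ ∫ _, C ∂κ θ' x :=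
        integral_mono (.of_bound hf.aestronglyMeasurable C
          (.of_forall fun z => by rw [Real.norm_of_nonneg (hf0 z)]; exact hfC z))
          (integrable_const C) hfC
    _ = C := by simp

theorem map_integral_mul_le_nlOp_mul_exp (hκ : ∀ θ, IsMarkovKernel (κ θ)) {Φ ψ : ℝ → ℝ}
    (hΦ : MonotoneOn Φ (Ici 0)) (hψ : Continuous ψ) (hψmono : Monotone ψ)
    (hψmaps : MapsTo ψ (Ici 0) (Ici 0)) (hΦψ : LeftInvOn Φ ψ (Ici 0))
    (hconv : ConvexOn ℝ (Ici 0) fun r => r * ψ r) {Ψ : E → E → ℝ} (hHarnack : HarnackIneq κ Φ Ψ)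
    {μ : Measure E} [IsProbabilityMeasure μ] {q : E → ℝ} (hqm : Measurable q) (hq0 : ∀ z, 0 ≤ q z)
    (hq : Integrable q μ) {θ : Θ} {x : E}
    (hκx : κ θ x = μ.withDensity fun z => ENNReal.ofReal (q z)) {g : E → ℝ} {C : ℝ}
    (hg : Measurable g) (hg0 : ∀ z, 0 ≤ g z) (hgC : ∀ z, g z ≤ C)
    (hgq : ∀ z, g z ≤ q z) (y : E) :
    Φ ((∫ z, g z ∂μ) * ψ (∫ z, g z ∂μ)) ≤ nlOp κ g y * Real.exp (Ψ x y) := by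
  have hm0 : 0 ≤ ∫ z, g z ∂μ := integral_nonneg hg0
  have hψg : Measurable fun z => ψ (g z) := hψ.measurable.comp hg
  have hψg0 : ∀ z, 0 ≤ ψ (g z) := fun z => hψmaps (hg0 z)
  have hΦψg : (fun z => Φ (ψ (g z))) = g := funext fun z => hΦψ (hg0 z)
  have hlower : (∫ z, g z ∂μ) * ψ (∫ z, g z ∂μ) ≤ nlOp κ (fun z => ψ (g z)) x :=
    calc (∫ z, g z ∂μ) * ψ (∫ z, g z ∂μ) ≤ ∫ z, q z * ψ (g z) ∂μ :=
          integral_mul_map_integral_le_integral_mul hψ hψmono hψmaps hconv hq hg hg0 hgC hgq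
      _ = ∫ z, ψ (g z) ∂κ θ x := by rw [hκx, integral_withDensity_ofReal hqm hq0]
      _ ≤ nlOp κ (fun z => ψ (g z)) x := integral_le_nlOp hκ hψg hψg0 (fun z => hψmono (hgC z)) θ x
  calc Φ ((∫ z, g z ∂μ) * ψ (∫ z, g z ∂μ)) ≤ Φ (nlOp κ (fun z => ψ (g z)) x) :=
        hΦ (mul_nonneg hm0 (hψmaps hm0)) (nlOp_nonneg hψg0 x) hlower
    _ ≤ nlOp κ g y * Real.exp (Ψ x y) := by
        simpa only [hΦψg] using hHarnack _ hψg hψg0 ⟨ψ C, fun z => hψmono (hgC z)⟩ x y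

theorem ofReal_nlOp_le_lintegral_mul {μ : Measure E} {p : E → E → ENNReal}
    (hsup : IsSupKernel κ μ p)
    {g : E → ℝ} {C : ℝ} (hg : Measurable g) (hg0 : ∀ z, 0 ≤ g z) (hgC : ∀ z, g z ≤ C)
    {x y : E} (hgp : ∀ z, ENNReal.ofReal (g z) ≤ p x z) :
    ENNReal.ofReal (nlOp κ g y) ≤ ∫⁻ z, p x z * p y z ∂μ :=
  (hsup g hg hg0 ⟨C, hgC⟩ y).trans <| lintegral_mono fun z => by
    rw [mul_comm]
    exact mul_le_mul_left (hgp z) _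

theorem ofReal_map_integral_mul_le_lintegral_mul_exp (hκ : ∀ θ, IsMarkovKernel (κ θ))
    {Φ ψ : ℝ → ℝ} (hΦ : MonotoneOn Φ (Ici 0)) (hψ : Continuous ψ) (hψmono : Monotone ψ)
    (hψmaps : MapsTo ψ (Ici 0) (Ici 0)) (hΦψ : LeftInvOn Φ ψ (Ici 0))
    (hconv : ConvexOn ℝ (Ici 0) fun r => r * ψ r) {Ψ : E → E → ℝ} (hHarnack : HarnackIneq κ Φ Ψ)
    {μ : Measure E} [IsProbabilityMeasure μ] {p : E → E → ENNReal} (hsup : IsSupKernel κ μ p)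
    {q : E → ℝ} (hqm : Measurable q) (hq0 : ∀ z, 0 ≤ q z) (hq : Integrable q μ) {θ : Θ} {x : E}
    (hκx : κ θ x = μ.withDensity fun z => ENNReal.ofReal (q z))
    (hqp : ∀ z, ENNReal.ofReal (q z) ≤ p x z) {g : E → ℝ} {C : ℝ} (hg : Measurable g)
    (hg0 : ∀ z, 0 ≤ g z) (hgC : ∀ z, g z ≤ C) (hgq : ∀ z, g z ≤ q z) (y : E) :
    ENNReal.ofReal (Φ ((∫ z, g z ∂μ) * ψ (∫ z, g z ∂μ))) ≤
      (∫⁻ z, p x z * p y z ∂μ) * ENNReal.ofReal (Real.exp (Ψ x y)) :=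
  calc ENNReal.ofReal (Φ ((∫ z, g z ∂μ) * ψ (∫ z, g z ∂μ)))
      ≤ ENNReal.ofReal (nlOp κ g y * Real.exp (Ψ x y)) :=
        ENNReal.ofReal_le_ofReal <| map_integral_mul_le_nlOp_mul_exp hκ hΦ hψ hψmono hψmaps hΦψ
          hconv hHarnack hqm hq0 hq hκx hg hg0 hgC hgq y
    _ = ENNReal.ofReal (nlOp κ g y) * ENNReal.ofReal (Real.exp (Ψ x y)) :=
        ENNReal.ofReal_mul (nlOp_nonneg hg0 y)
    _ ≤ (∫⁻ z, p x z * p y z ∂μ) * ENNReal.ofReal (Real.exp (Ψ x y)) := by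
        gcongr
        exact ofReal_nlOp_le_lintegral_mul hsup hg hg0 hgC
          fun z => (ENNReal.ofReal_le_ofReal (hgq z)).trans (hqp z)

end NonlinearMarkov

theorem stmt_5_general {d : ℕ} {Θ : Type*} [Nonempty Θ]
    (κ : Θ → Kernel (EuclideanSpace ℝ (Fin d)) (EuclideanSpace ℝ (Fin d)))
    (hκ : ∀ θ, IsMarkovKernel (κ θ))
    -- Φ is a continuous strictly increasing bijection of [0,∞) onto itself,
    -- with inverse Φinv, such that r ↦ r·Φ⁻¹(r) is convex on [0,∞)
    (Φ Φinv : ℝ → ℝ)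
    (hΦcont : ContinuousOn Φ (Set.Ici 0))
    (hΦmono : StrictMonoOn Φ (Set.Ici 0))
    (hΦmaps : Set.MapsTo Φ (Set.Ici 0) (Set.Ici 0))
    (hΦinv : ∀ r ∈ Set.Ici (0:ℝ), Φinv (Φ r) = r ∧ Φ (Φinv r) = r ∧ 0 ≤ Φinv r)
    (hconv : ConvexOn ℝ (Set.Ici 0) (fun r => r * Φinv r))
    (Ψ : EuclideanSpace ℝ (Fin d) → EuclideanSpace ℝ (Fin d) → ℝ)
    (hHarnack : ∀ f : EuclideanSpace ℝ (Fin d) → ℝ, Measurable f → (∀ y, 0 ≤ f y) →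
      (∃ C, ∀ y, f y ≤ C) → ∀ x y,
      Φ (nlOp κ f x) ≤ nlOp κ (fun z => Φ (f z)) y * Real.exp (Ψ x y))
    (μ : Measure (EuclideanSpace ℝ (Fin d))) [IsProbabilityMeasure μ]
    -- densities p_θ of the kernels with respect to μ
    (pθ : Θ → EuclideanSpace ℝ (Fin d) → EuclideanSpace ℝ (Fin d) → ℝ)
    (hpθmeas : ∀ θ, Measurable (Function.uncurry (pθ θ)))
    (hpθ0 : ∀ θ x z, 0 ≤ pθ θ x z)
    (hdens : ∀ θ x (A : Set (EuclideanSpace ℝ (Fin d))), MeasurableSet A →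
      κ θ x A = ∫⁻ z in A, ENNReal.ofReal (pθ θ x z) ∂μ)
    -- p is a sup-kernel of P̄ with respect to μ dominating all the p_θ
    (p : EuclideanSpace ℝ (Fin d) → EuclideanSpace ℝ (Fin d) → ENNReal)
    (hsup : ∀ f : EuclideanSpace ℝ (Fin d) → ℝ, Measurable f → (∀ z, 0 ≤ f z) →
      (∃ C, ∀ z, f z ≤ C) → ∀ x,
      ENNReal.ofReal (nlOp κ f x) ≤ ∫⁻ z, p x z * ENNReal.ofReal (f z) ∂μ)
    (hple : ∀ θ x z, ENNReal.ofReal (pθ θ x z) ≤ p x z) :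
    ∀ x y, ENNReal.ofReal (Real.exp (-(Ψ x y))) ≤ ∫⁻ z, p x z * p y z ∂μ := by
  intro x y
  obtain ⟨θ⟩ := ‹Nonempty Θ›
  have hmaps : MapsTo Φinv (Ici 0) (Ici 0) := fun r hr => (hΦinv r hr).2.2
  have hinv : LeftInvOn Φ Φinv (Ici 0) := fun r hr => (hΦinv r hr).2.1
  obtain ⟨G, hGmono, hGcont, hGeq⟩ := exists_monotone_continuous_eqOn_inv hΦmono hΦmaps
    (fun r hr => (hΦinv r hr).1) hinv hmaps
  have hGmaps : MapsTo G (Ici 0) (Ici 0) := hmaps.congr hGeq.symm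
  have hGinv : LeftInvOn Φ G (Ici 0) := fun r hr => by rw [hGeq hr]; exact hinv hr
  have hGconv : ConvexOn ℝ (Ici 0) fun r => r * G r := hconv.congr fun r hr => by rw [hGeq hr]
  set q := pθ θ x
  have hqm : Measurable q := (hpθmeas θ).comp measurable_prodMk_left
  have hκx : κ θ x = μ.withDensity fun z => ENNReal.ofReal (q z) :=
    Measure.ext fun A hA => by rw [hdens θ x A hA, withDensity_apply _ hA]
  have : IsFiniteMeasure (μ.withDensity fun z => ENNReal.ofReal (q z)) := hκx ▸ inferInstance
  have hq : Integrable q μ := integrable_of_isFiniteMeasure_withDensity_ofReal hqm (hpθ0 θ x)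
  have hq1 : ∫ z, q z ∂μ = 1 := by
    simpa [← hκx] using (integral_withDensity_ofReal (μ := μ) hqm (hpθ0 θ x) fun _ => 1).symm
  have htrunc0 : ∀ (n : ℕ) z, 0 ≤ min (q z) n := fun n z => le_min (hpθ0 θ x z) n.cast_nonneg
  have hbound := fun n : ℕ => ofReal_map_integral_mul_le_lintegral_mul_exp hκ hΦmono.monotoneOn
    hGcont hGmono hGmaps hGinv hGconv hHarnack hsup hqm (hpθ0 θ x) hq hκx (hple θ x)
    (hqm.min measurable_const) (htrunc0 n) (fun z => min_le_right (q z) (n : ℝ))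
    (fun z => min_le_left _ _) y
  have hlim := tendsto_comp_mul_comp_of_tendsto_one hΦcont hGcont hGmaps
    (hq1 ▸ tendsto_integral_min_natCast hq) fun n => integral_nonneg (htrunc0 n)
  rw [hGinv (mem_Ici.2 zero_le_one)] at hlim
  exact ENNReal.ofReal_exp_neg_le <|
    le_of_tendsto' (ENNReal.ofReal_one ▸ ENNReal.tendsto_ofReal hlim) hbound

theorem stmt_5 {d : ℕ} {Θ : Type*} [Nonempty Θ]
    (κ : Θ → Kernel (EuclideanSpace ℝ (Fin d)) (EuclideanSpace ℝ (Fin d)))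
    (hκ : ∀ θ, IsMarkovKernel (κ θ))
    -- Φ is a continuous strictly increasing bijection of [0,∞) onto itself,
    -- with inverse Φinv, such that r ↦ r·Φ⁻¹(r) is convex on [0,∞)
    (Φ Φinv : ℝ → ℝ)
    (hΦ0 : Φ 0 = 0)
    (hΦcont : ContinuousOn Φ (Set.Ici 0))
    (hΦmono : StrictMonoOn Φ (Set.Ici 0))
    (hΦmaps : Set.MapsTo Φ (Set.Ici 0) (Set.Ici 0))
    (hΦtop : Tendsto Φ atTop atTop)
    (hΦinv : ∀ r ∈ Set.Ici (0:ℝ), Φinv (Φ r) = r ∧ Φ (Φinv r) = r ∧ 0 ≤ Φinv r)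
    (hconv : ConvexOn ℝ (Set.Ici 0) (fun r => r * Φinv r))
    (Ψ : EuclideanSpace ℝ (Fin d) → EuclideanSpace ℝ (Fin d) → ℝ)
    (hΨmeas : Measurable (Function.uncurry Ψ))
    (hΨnonneg : ∀ x y, 0 ≤ Ψ x y)
    (hHarnack : ∀ f : EuclideanSpace ℝ (Fin d) → ℝ, Measurable f → (∀ y, 0 ≤ f y) →
      (∃ C, ∀ y, f y ≤ C) → ∀ x y,
      Φ (nlOp κ f x) ≤ nlOp κ (fun z => Φ (f z)) y * Real.exp (Ψ x y))
    (μ : Measure (EuclideanSpace ℝ (Fin d))) [IsProbabilityMeasure μ]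
    -- densities p_θ of the kernels with respect to μ
    (pθ : Θ → EuclideanSpace ℝ (Fin d) → EuclideanSpace ℝ (Fin d) → ℝ)
    (hpθmeas : ∀ θ, Measurable (Function.uncurry (pθ θ)))
    (hpθ0 : ∀ θ x z, 0 ≤ pθ θ x z)
    (hdens : ∀ θ x (A : Set (EuclideanSpace ℝ (Fin d))), MeasurableSet A →
      κ θ x A = ∫⁻ z in A, ENNReal.ofReal (pθ θ x z) ∂μ)
    -- p is a sup-kernel of P̄ with respect to μ dominating all the p_θ
    (p : EuclideanSpace ℝ (Fin d) → EuclideanSpace ℝ (Fin d) → ENNReal)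
    (hpmeas : Measurable (Function.uncurry p))
    (hsup : ∀ f : EuclideanSpace ℝ (Fin d) → ℝ, Measurable f → (∀ z, 0 ≤ f z) →
      (∃ C, ∀ z, f z ≤ C) → ∀ x,
      ENNReal.ofReal (nlOp κ f x) ≤ ∫⁻ z, p x z * ENNReal.ofReal (f z) ∂μ)
    (hple : ∀ θ x z, ENNReal.ofReal (pθ θ x z) ≤ p x z) :
    ∀ x y, ENNReal.ofReal (Real.exp (-(Ψ x y))) ≤ ∫⁻ z, p x z * p y z ∂μ :=
  stmt_5_general κ hκ Φ Φinv hΦcont hΦmono hΦmaps hΦinv hconv Ψ hHarnack μ pθ hpθmeas hpθ0 hdens p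
    hsup hple
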